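/- arXiv:2601.19733 — 2 statements merged into one kernel-verified Lean document; each statement's English description precedes it below -/
import Mathlib

section
/- Given two quadratic trajectories y_i(t) = y_i(0) + y_i'(0) t + ((k - m_{i+1})/4) t^2 and y_{i+1}(t) = y_{i+1}(0) + y_{i+1}'(0) t + ((k + m_i)/4) t^2 with m_i, m_{i+1} > 0 and y_i(0) < y_{i+1}(0), if y_i(t_c) = y_{i+1}(t_c) at t_c = 2*sqrt((y_{i+1}(0) - y_i(0))/(m_i + m_{i+1})), then y_i'(0) - y_{i+1}'(0) = sqrt((y_{i+1}(0) - y_i(0))(m_i + m_{i+1})), and hence the collision is glancing: y_i'(t_c) = y_{i+1}'(t_c). -/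
/-- If the two quadratic trajectories meet at
`t_c = 2 sqrt((y2(0)-y1(0))/(m1+m2))`, then the initial relative velocity equals
`sqrt((y2(0)-y1(0))(m1+m2))` and the collision is glancing. -/
theorem collision_at_tc_implies_glancing
    (m1 m2 k y1 y2 v1 v2 : ℝ)
    (hm1 : 0 < m1) (hm2 : 0 < m2) (hy : y1 < y2)
    (hpos : y1 + v1 * (2 * Real.sqrt ((y2 - y1) / (m1 + m2)))
        + (k - m2) / 4 * (2 * Real.sqrt ((y2 - y1) / (m1 + m2))) ^ 2
      = y2 + v2 * (2 * Real.sqrt ((y2 - y1) / (m1 + m2)))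
        + (k + m1) / 4 * (2 * Real.sqrt ((y2 - y1) / (m1 + m2))) ^ 2) :
    v1 - v2 = Real.sqrt ((y2 - y1) * (m1 + m2)) ∧
    v1 + (k - m2) / 2 * (2 * Real.sqrt ((y2 - y1) / (m1 + m2)))
    = v2 + (k + m1) / 2 * (2 * Real.sqrt ((y2 - y1) / (m1 + m2))) := by
  have hdpos : 0 < y2 - y1 := by linarith
  have hM : 0 < m1 + m2 := by linarith
  set s := Real.sqrt ((y2 - y1) / (m1 + m2)) with hs
  have hs2 : s ^ 2 = (y2 - y1) / (m1 + m2) := Real.sq_sqrt (by positivity)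
  have hspos : 0 < s := Real.sqrt_pos.mpr (by positivity)
  have hMs2 : (m1 + m2) * s ^ 2 = y2 - y1 := by
    rw [hs2]; field_simp
  have key : v1 - v2 = (m1 + m2) * s := by
    have h : (v1 - v2) * s = ((m1 + m2) * s) * s := by nlinarith [hpos, hMs2]
    exact mul_right_cancel₀ (ne_of_gt hspos) h
  have hsqrt : Real.sqrt ((y2 - y1) * (m1 + m2)) = (m1 + m2) * s := by
    have h1 : (y2 - y1) * (m1 + m2) = (m1 + m2) ^ 2 * ((y2 - y1) / (m1 + m2)) := by
      field_simp
    rw [h1, Real.sqrt_mul (sq_nonneg _), Real.sqrt_sq hM.le, hs]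
  refine ⟨by rw [hsqrt]; exact key, by nlinarith [key]⟩
end

section
/- Let y : [0,∞) → R be a C^1 function with y(0) > 0, whose derivative y' is Lipschitz with |y''(t)| ≤ 1/2 wherever it exists (in particular y''(t) > -1/2 a.e.). If t_E > 0 is a time with y(t_E) = 0 and y'(t_E) = 0, then t_E > sqrt(y(0)). -/
/-!
The velocity is `1/2`-Lipschitz and vanishes at `tE`, so `-y' t ≤ (tE - t) / 2` on `[0, tE]`:
the particle descends by at most `tE ^ 2 / 4` before time `tE`, whence `y 0 ≤ tE ^ 2 / 4 < tE ^ 2`.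
-/

open Set

theorem le_sub_deriv_mul_add_of_lipschitzOnWith {f f' : ℝ → ℝ} {L : NNReal} {a b : ℝ}
    (hab : a ≤ b) (hf : ∀ t ∈ Icc a b, HasDerivAt f (f' t) t)
    (hf' : LipschitzOnWith L f' (Icc a b)) :
    f a ≤ f b - f' b * (b - a) + L / 2 * (b - a) ^ 2 := by
  set g : ℝ → ℝ := fun t => f t + f' b * (b - t) - L / 2 * (b - t) ^ 2
  have hb : b ∈ Icc a b := ⟨hab, le_rfl⟩
  have hg : ∀ t ∈ Icc a b, HasDerivAt g (f' t - f' b + L * (b - t)) t := by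
    intro t ht
    refine (((hf t ht).add (((hasDerivAt_id' t).const_sub b).const_mul (f' b))).sub
      ((((hasDerivAt_id' t).const_sub b).pow 2).const_mul ((L : ℝ) / 2))).congr_deriv ?_
    ring
  have hg_nonneg : ∀ t ∈ Icc a b, 0 ≤ f' t - f' b + L * (b - t) := by
    intro t ht
    have h := hf'.dist_le_mul t ht b hb
    rw [Real.dist_eq, Real.dist_eq, abs_of_nonpos (sub_nonpos.2 ht.2)] at h
    linarith [neg_abs_le (f' t - f' b)]
  have hmono : MonotoneOn g (Icc a b) :=
    monotoneOn_of_hasDerivWithinAt_nonneg (convex_Icc a b)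
      (fun t ht => (hg t ht).continuousAt.continuousWithinAt)
      (fun t ht => (hg t (interior_subset ht)).hasDerivWithinAt)
      (fun t ht => hg_nonneg t (interior_subset ht))
  have hg_ab := hmono ⟨le_rfl, hab⟩ hb hab
  simp only [g, sub_self] at hg_ab
  linarith

theorem equilibration_time_lower_bound_general
    (y y' : ℝ → ℝ)
    (hderiv : ∀ t ∈ Set.Ici (0 : ℝ), HasDerivAt y (y' t) t)
    (hlip : LipschitzOnWith (1 / 2 : NNReal) y' (Set.Ici (0 : ℝ)))
    (tE : ℝ) (htE : 0 < tE) (hyE : y tE = 0) (hvE : y' tE = 0) :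
    Real.sqrt (y 0) < tE := by
  have hdescent := le_sub_deriv_mul_add_of_lipschitzOnWith htE.le
    (fun t ht => hderiv t ht.1) (hlip.mono Icc_subset_Ici_self)
  rw [hyE, hvE] at hdescent
  push_cast at hdescent
  rw [Real.sqrt_lt' htE]
  nlinarith

/-- a particle of a perfect solution starting at height `y 0 > 0`
with velocity of Lipschitz constant `1/2` cannot reach rest at the origin before
time `sqrt (y 0)`. -/
theorem equilibration_time_lower_bound
    (y y' : ℝ → ℝ) (hy0 : 0 < y 0)
    (hderiv : ∀ t ∈ Set.Ici (0 : ℝ), HasDerivAt y (y' t) t)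
    (hlip : LipschitzOnWith (1 / 2 : NNReal) y' (Set.Ici (0 : ℝ)))
    (tE : ℝ) (htE : 0 < tE) (hyE : y tE = 0) (hvE : y' tE = 0) :
    Real.sqrt (y 0) < tE :=
  equilibration_time_lower_bound_general y y' hderiv hlip tE htE hyE hvE
end
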